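/- Let E be a real Hilbert space, A : E → E a continuous linear self-adjoint operator with ⟨A v, v⟩ ≥ 0 for all v ∈ E, α > 0 and T > 0. If p : ℝ → E is twice continuously differentiable on [0,T] and satisfies −p″(t) + A(A p(t)) = 0 for all t ∈ [0,T], p(T) = 0, and −p′(0) + A p(0) + (1/α) p(0) = 0, then p(t) = 0 for all t ∈ [0,T]. (This is the energy-method uniqueness argument for the homogeneous fourth order system underlying the uniqueness claims of Theorems 'first existence theorem' and 'equivalence mixed': testing the equation with p itself yields ∫₀ᵀ ‖p′‖² + ‖A p‖² dt + ⟨A p(0), p(0)⟩ + (1/α)‖p(0)‖² = 0, forcing p ≡ 0.) -/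
import Mathlib


open scoped RealInnerProductSpace

/-- Energy-method uniqueness for the homogeneous fourth order system: if `A` is
self-adjoint and positive semidefinite, and `p` is twice continuously differentiable on
`[0,T]` with `−p″ + A² p = 0`, `p(T) = 0`, and `−p′(0) + A p(0) + (1/α) p(0) = 0`, then
`p ≡ 0` on `[0,T]`. -/
theorem homogeneous_fourth_order_unique
    {E : Type*} [NormedAddCommGroup E] [InnerProductSpace ℝ E] [CompleteSpace E]
    (A : E →L[ℝ] E) (hsa : ∀ v w : E, ⟪A v, w⟫ = ⟪v, A w⟫)
    (hpos : ∀ v : E, ⟪A v, v⟫ ≥ 0)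
    (T α : ℝ) (hT : 0 < T) (hα : 0 < α)
    (p p' p'' : ℝ → E)
    (hp : ∀ t ∈ Set.Icc (0 : ℝ) T, HasDerivAt p (p' t) t)
    (hp' : ∀ t ∈ Set.Icc (0 : ℝ) T, HasDerivAt p' (p'' t) t)
    (hp''cont : ContinuousOn p'' (Set.Icc (0 : ℝ) T))
    (heq : ∀ t ∈ Set.Icc (0 : ℝ) T, -p'' t + A (A (p t)) = 0)
    (hT0 : p T = 0)
    (hinit : -p' 0 + A (p 0) + (1 / α) • p 0 = 0) :
    ∀ t ∈ Set.Icc (0 : ℝ) T, p t = 0 := by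
  have h0T : (0 : ℝ) ∈ Set.Icc (0 : ℝ) T := ⟨le_refl _, hT.le⟩
  set g : ℝ → ℝ := fun t => ⟪p' t, p t⟫ with hg_def
  set G : ℝ → ℝ := fun t => ⟪p' t, p' t⟫ + ⟪p'' t, p t⟫ with hG_def
  -- p'' = A (A p)
  have hpp'' : ∀ t ∈ Set.Icc (0 : ℝ) T, p'' t = A (A (p t)) := by
    intro t ht
    have h := heq t ht
    have : A (A (p t)) = p'' t := by
      have := congrArg (fun x => p'' t + x) h
      simpa [add_comm, ← add_assoc] using this
    exact this.symm
  -- g has derivative G on [0,T]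
  have hg : ∀ t ∈ Set.Icc (0 : ℝ) T, HasDerivAt g (G t) t := by
    intro t ht
    have := (hp' t ht).inner ℝ (hp t ht)
    simpa [hG_def, real_inner_comm (p' t) (p' t), add_comm] using this
  -- G is nonnegative on [0,T]
  have hGnn : ∀ t ∈ Set.Icc (0 : ℝ) T, 0 ≤ G t := by
    intro t ht
    have h1 : (0 : ℝ) ≤ ⟪p' t, p' t⟫ := real_inner_self_nonneg
    have h2 : ⟪p'' t, p t⟫ = ⟪A (p t), A (p t)⟫ := by
      rw [hpp'' t ht, hsa]
    have h3 : (0 : ℝ) ≤ ⟪p'' t, p t⟫ := h2 ▸ real_inner_self_nonneg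
    simpa [hG_def] using add_nonneg h1 h3
  -- g is monotone on [0,T]
  have hmono : MonotoneOn g (Set.Icc (0 : ℝ) T) := by
    apply monotoneOn_of_deriv_nonneg (convex_Icc 0 T)
    · exact fun t ht => ((hg t ht).continuousAt).continuousWithinAt
    · intro t ht
      rw [interior_Icc] at ht
      exact ((hg t (Set.mem_Icc_of_Ioo ht)).differentiableAt).differentiableWithinAt
    · intro t ht
      rw [interior_Icc] at ht
      rw [(hg t (Set.mem_Icc_of_Ioo ht)).deriv]
      exact hGnn t (Set.mem_Icc_of_Ioo ht)
  -- g 0 ≥ 0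
  have hg0 : 0 ≤ g 0 := by
    have hp'0 : p' 0 = A (p 0) + (1 / α) • p 0 := by
      have := congrArg (fun x => p' 0 + x) hinit
      simpa [add_comm, ← add_assoc] using this.symm
    have : g 0 = ⟪A (p 0), p 0⟫ + (1 / α) * ⟪p 0, p 0⟫ := by
      simp [hg_def, hp'0, inner_add_left, real_inner_smul_left]
    rw [this]
    have h1 : (0 : ℝ) ≤ ⟪A (p 0), p 0⟫ := hpos _
    have h2 : (0 : ℝ) ≤ (1 / α) * ⟪p 0, p 0⟫ :=
      mul_nonneg (by positivity) real_inner_self_nonneg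
    linarith
  -- g T = 0
  have hgT : g T = 0 := by simp [hg_def, hT0]
  -- g ≡ 0 on [0,T]
  have hgzero : ∀ t ∈ Set.Icc (0 : ℝ) T, g t = 0 := by
    intro t ht
    have h1 : g 0 ≤ g t := hmono h0T ht ht.1
    have h2 : g t ≤ g T := hmono ht ⟨hT.le, le_refl T⟩ ht.2
    linarith
  -- G ≡ 0 on [0,T]
  have hGzero : ∀ t ∈ Set.Icc (0 : ℝ) T, G t = 0 := by
    intro t ht
    have hderiv : HasDerivWithinAt g (G t) (Set.Icc (0 : ℝ) T) t :=
      (hg t ht).hasDerivWithinAt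
    have hzero : HasDerivWithinAt g 0 (Set.Icc (0 : ℝ) T) t := by
      have : HasDerivWithinAt (fun _ : ℝ => (0 : ℝ)) 0 (Set.Icc (0 : ℝ) T) t :=
        (hasDerivAt_const t (0 : ℝ)).hasDerivWithinAt
      exact this.congr (fun y hy => hgzero y hy) (hgzero t ht)
    exact (uniqueDiffOn_Icc hT t ht).eq_deriv _ hderiv hzero
  -- p' ≡ 0 on [0,T]
  have hp'zero : ∀ t ∈ Set.Icc (0 : ℝ) T, p' t = 0 := by
    intro t ht
    have h2 : ⟪p'' t, p t⟫ = ⟪A (p t), A (p t)⟫ := by rw [hpp'' t ht, hsa]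
    have h1 : (0 : ℝ) ≤ ⟪p' t, p' t⟫ := real_inner_self_nonneg
    have h3 : (0 : ℝ) ≤ ⟪p'' t, p t⟫ := h2 ▸ real_inner_self_nonneg
    have hG := hGzero t ht
    have : ⟪p' t, p' t⟫ = 0 := by
      simp only [hG_def] at hG; linarith
    exact inner_self_eq_zero.mp this
  -- p is constant on [0,T]
  have hconst : ∀ t ∈ Set.Icc (0 : ℝ) T, p t = p 0 := by
    apply constant_of_has_deriv_right_zero
    · exact fun t ht => ((hp t ht).continuousAt).continuousWithinAt
    · intro t ht
      have ht' : t ∈ Set.Icc (0 : ℝ) T := Set.mem_Icc_of_Ico ht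
      have := (hp t ht').hasDerivWithinAt (s := Set.Ici t)
      rwa [hp'zero t ht'] at this
  intro t ht
  rw [hconst t ht, ← hconst T ⟨hT.le, le_refl T⟩, hT0]
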